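/- Let C ⊆ F_q^n be a code of dimension k and minimum distance d. Then E[C] = n(H_n − H_{d−1}) − sum_{s=k}^{n−d} α(C,s)/binom(n−1,s). -/

import Mathlib

/-- Gaussian binomial coefficient as a polynomial in `q`, evaluated at an integer. -/
def qb (q : ℤ) : ℕ → ℕ → ℤ
  | _, 0 => 1
  | 0, _+1 => 0
  | n+1, k+1 => qb q n k + q ^ (k+1) * qb q n (k+1)

/-- Hamming weight of a vector. -/
noncomputable def hamWt {R : Type*} [Zero R] {n : ℕ} (x : Fin n → R) : ℕ :=
  Nat.card {i : Fin n // x i ≠ 0}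

/-- The `n`-th harmonic number. -/
noncomputable def harm (n : ℕ) : ℝ := ∑ i ∈ Finset.range n, (1 : ℝ) / (i + 1)

/-- Expected number of i.i.d. uniform draws of columns of `G` (with replacement)
until the drawn columns span `F^k`, written as `∑_{t≥0} P(T > t)`. -/
noncomputable def coverDepth {F : Type*} [Field F] {k n : ℕ}
    (G : Matrix (Fin k) (Fin n) F) : ℝ :=
  ∑' t : ℕ, (Nat.card {f : Fin t → Fin n //
      Submodule.span F (Set.range fun i => fun r => G r (f i)) ≠ ⊤} : ℝ) / (n : ℝ) ^ t

/-- Vectors whose support is contained in the finite set `S`. -/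
def zeroOutside (F : Type*) [Field F] (n : ℕ) (S : Finset (Fin n)) :
    Submodule F (Fin n → F) where
  carrier := {x | ∀ i ∉ S, x i = 0}
  add_mem' := by intro a b ha hb i hi; simp [ha i hi, hb i hi]
  zero_mem' := by intro i hi; rfl
  smul_mem' := by intro c a ha i hi; simp [ha i hi]

/-- The dual code with respect to the standard bilinear form. -/
def dualCode (F : Type*) [Field F] (n : ℕ) (C : Submodule F (Fin n → F)) :
    Submodule F (Fin n → F) where
  carrier := {y | ∀ x ∈ C, ∑ i, x i * y i = 0}
  add_mem' := by
    intro a b ha hb x hx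
    simp only [Pi.add_apply, mul_add, Finset.sum_add_distrib, ha x hx, hb x hx, add_zero]
  zero_mem' := by intro x hx; simp
  smul_mem' := by
    intro c a ha x hx
    simp only [Pi.smul_apply, smul_eq_mul, mul_left_comm, ← Finset.mul_sum, ha x hx, mul_zero]

/-- Projection onto the coordinates indexed by `S`. -/
def projS (F : Type*) [Field F] {n : ℕ} (S : Finset (Fin n)) :
    (Fin n → F) →ₗ[F] ({x // x ∈ S} → F) :=
  LinearMap.funLeft F F (fun i => (i : Fin n))

/-- The extension code of `C` over an extension field `E`. -/
def extCode {F E : Type*} [Field F] [Field E] [Algebra F E] {n : ℕ}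
    (C : Submodule F (Fin n → F)) : Submodule E (Fin n → E) :=
  Submodule.span E ((fun c : Fin n → F => fun i => algebraMap F E (c i)) '' C)

/-! Write `P(T > t)` as the probability that the columns drawn in the first `t` draws form a set
`S` that is not an information set, and split according to `S`. The expected number of times `t`
at which the drawn set is exactly `S` equals `1 / C(n-1, |S|)`: splitting off the first draw
`c ∈ S`, the remaining draws form the set `S` or `S \ {c}`, which gives a linear equation solved by
induction on `S`. A non-information set has at most `n - d` elements, because some nonzero
codeword vanishes on it. Grouping by `s = |S|` gives `∑_{s ≤ n-d} (C(n,s) - α(C,s)) / C(n-1,s)`,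
and `C(n,s) / C(n-1,s) = n / (n-s)` produces the harmonic numbers. -/

open Finset

theorem Finset.insert_eq_iff {β : Type*} [DecidableEq β] {c : β} {T S : Finset β} :
    insert c T = S ↔ c ∈ S ∧ (T = S ∨ T = S.erase c) := by
  constructor
  · rintro rfl
    refine ⟨mem_insert_self c T, ?_⟩
    by_cases hc : c ∈ T
    · exact .inl (insert_eq_of_mem hc).symm
    · exact .inr (erase_insert hc).symm
  · rintro ⟨hc, rfl | rfl⟩
    · exact insert_eq_of_mem hc
    · exact insert_erase hc

theorem Fin.image_univ_cons {β : Type*} [DecidableEq β] {t : ℕ} (c : β) (g : Fin t → β) :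
    univ.image (Fin.cons c g : Fin (t + 1) → β) = insert c (univ.image g) := by
  ext
  simp [Fin.exists_fin_succ, eq_comm]

lemma eq_one_div_choose_of_eq {n s : ℕ} {A : ℝ} (hs : s + 1 < n)
    (h : A = (s + 1) / n * A + 1 / n * ((s + 1) * (1 / (n - 1).choose s))) :
    A = 1 / (n - 1).choose (s + 1) := by
  have hn : (n : ℝ) ≠ 0 := by exact_mod_cast (show n ≠ 0 by omega)
  have hB : ((n - 1).choose s : ℝ) ≠ 0 := by exact_mod_cast (Nat.choose_pos (by omega)).ne'
  have hA : A * (n - (s + 1)) * (n - 1).choose s = s + 1 := by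
    field_simp at h
    linear_combination h
  have hchoose : ((n - 1).choose (s + 1) : ℝ) * (s + 1) = (n - 1).choose s * (n - (s + 1)) := by
    have h := Nat.choose_succ_right_eq (n - 1) s
    rw [show n - 1 - s = n - (s + 1) by omega] at h
    rw [← Nat.cast_add_one, ← Nat.cast_sub hs.le]
    exact_mod_cast h
  rw [eq_div_iff (by exact_mod_cast (Nat.choose_pos (by omega)).ne')]
  refine mul_right_cancel₀ (b := (s : ℝ) + 1) (by positivity) ?_
  linear_combination A * hchoose + hA

section ImageCount

variable {β : Type*} [Fintype β] [DecidableEq β]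

def imageCount (t : ℕ) (S : Finset β) : ℕ := #{f : Fin t → β | univ.image f = S}

lemma imageCount_zero (S : Finset β) : imageCount 0 S = if S = ∅ then 1 else 0 := by
  split_ifs with h <;> simp [imageCount, h, eq_comm]

lemma imageCount_succ (t : ℕ) (S : Finset β) :
    imageCount (t + 1) S = ∑ c ∈ S, (imageCount t S + imageCount t (S.erase c)) := by
  rw [imageCount, card_filter, ← (Fin.consEquiv fun _ => β).sum_comp, Fintype.sum_prod_type]
  simp only [Fin.consEquiv, Equiv.coe_fn_mk, Fin.image_univ_cons, insert_eq_iff, ite_and]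
  rw [← sum_subset (subset_univ S) fun c _ hc => by simp [hc]]
  refine sum_congr rfl fun c hc => ?_
  have hdisj : Disjoint ({g | univ.image g = S} : Finset (Fin t → β))
      ({g | univ.image g = S.erase c} : Finset (Fin t → β)) := by
    rw [disjoint_filter]
    intro g _ h h'
    exact S.erase_ne_self.2 hc (h' ▸ h)
  simp only [hc, if_true, ← card_filter, filter_or, card_union_of_disjoint hdisj, imageCount]

lemma imageCount_le_pow (t : ℕ) (S : Finset β) : imageCount t S ≤ #S ^ t := by
  calc imageCount t S ≤ #(Fintype.piFinset fun _ : Fin t => S) := by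
        refine card_le_card fun f hf => ?_
        simp only [mem_filter] at hf
        simp [← hf.2]
    _ = #S ^ t := by simp

lemma card_filter_image_eq_sum_imageCount (P : Finset β → Prop) [DecidablePred P] (t : ℕ) :
    #{f : Fin t → β | P (univ.image f)} = ∑ S with P S, imageCount t S := by
  rw [card_eq_sum_card_fiberwise (f := fun f => univ.image f) (t := {S | P S})
    fun f hf => by simpa using hf]
  refine sum_congr rfl fun S hS => ?_
  rw [imageCount, filter_filter]
  congr 1
  exact filter_congr fun f _ => ⟨And.right, fun h => ⟨h ▸ (mem_filter.1 hS).2, h⟩⟩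

lemma imageCount_succ_div_pow (t : ℕ) (S : Finset β) :
    (imageCount (t + 1) S : ℝ) / Fintype.card β ^ (t + 1)
      = #S / Fintype.card β * (imageCount t S / Fintype.card β ^ t)
        + 1 / Fintype.card β * ∑ c ∈ S, (imageCount t (S.erase c) : ℝ) / Fintype.card β ^ t := by
  rw [imageCount_succ, sum_add_distrib, sum_const, smul_eq_mul]
  push_cast
  rw [← sum_div]
  field_simp
  ring

lemma summable_imageCount {S : Finset β} (hS : #S < Fintype.card β) :
    Summable fun t => (imageCount t S : ℝ) / Fintype.card β ^ t := by
  have hn : (0 : ℝ) < Fintype.card β := by exact_mod_cast hS.trans_le' (Nat.zero_le _)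
  refine Summable.of_nonneg_of_le (fun t => by positivity) (fun t => ?_)
    (summable_geometric_of_lt_one (r := (#S : ℝ) / Fintype.card β) (by positivity)
      ((div_lt_one hn).2 (by exact_mod_cast hS)))
  rw [div_pow]
  gcongr
  exact_mod_cast imageCount_le_pow t S

lemma hasSum_imageCount {S : Finset β} (hS : #S < Fintype.card β) :
    HasSum (fun t => (imageCount t S : ℝ) / Fintype.card β ^ t)
      (1 / (Fintype.card β - 1).choose #S) := by
  induction S using Finset.strongInduction with
  | H S ih =>
  set n := Fintype.card β
  obtain ⟨A, hA⟩ := summable_imageCount hS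
  have herase : ∀ c ∈ S, HasSum (fun t => (imageCount t (S.erase c) : ℝ) / n ^ t)
      (1 / ((n - 1).choose (#S - 1) : ℝ)) := fun c hc => by
    rw [← card_erase_of_mem hc]
    exact ih _ (erase_ssubset hc) (card_erase_le.trans_lt hS)
  -- both sides are the sum of the shifted series `t ↦ imageCount (t + 1) S / n ^ (t + 1)`
  have key : A - imageCount 0 S
      = #S / n * A + 1 / n * ∑ c ∈ S, 1 / ((n - 1).choose (#S - 1) : ℝ) := by
    refine (by simpa using (hasSum_nat_add_iff' 1).2 hA : HasSum _ _).unique ?_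
    simp_rw [imageCount_succ_div_pow]
    exact (hA.mul_left _).add ((hasSum_sum herase).mul_left _)
  suffices A = 1 / ((n - 1).choose #S : ℝ) from this ▸ hA
  rcases S.eq_empty_or_nonempty with rfl | hne
  · simpa [imageCount_zero, sub_eq_zero] using key
  obtain ⟨s, hs⟩ := Nat.exists_eq_add_one_of_ne_zero (card_ne_zero.2 hne)
  rw [imageCount_zero, if_neg hne.ne_empty, sum_const, nsmul_eq_mul, hs, Nat.add_sub_cancel]
    at key
  rw [hs] at hS ⊢
  exact eq_one_div_choose_of_eq hS (by simpa using key)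

end ImageCount

lemma sum_filter_not_eq_sum_range_choose_sub {β : Type*} [Fintype β] (P : Finset β → Prop)
    [DecidablePred P] {m : ℕ} (hP : ∀ S, ¬ P S → #S ≤ m) (w : ℕ → ℝ) :
    ∑ S with ¬ P S, w #S = ∑ s ∈ range (m + 1), (Fintype.card β).choose s * w s
      - ∑ s ∈ range (m + 1), #{S | #S = s ∧ P S} * w s := by
  classical
  rw [← sum_fiberwise_of_maps_to (g := card) (t := range (m + 1))
    fun S hS => mem_range.2 (Nat.lt_succ_of_le (hP S (mem_filter.1 hS).2)), ← sum_sub_distrib]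
  refine sum_congr rfl fun s _ => ?_
  have hcount : #{S : Finset β | ¬ P S ∧ #S = s} + #{S | #S = s ∧ P S}
      = (Fintype.card β).choose s := by
    rw [← Fintype.card_finset_len, Fintype.card_subtype, add_comm,
      ← card_filter_add_card_filter_not (s := {S : Finset β | #S = s}) P, filter_filter,
      filter_filter]
    congr 2
    exact filter_congr fun S _ => and_comm
  rw [sum_congr rfl fun S hS => by rw [(mem_filter.1 hS).2], sum_const, nsmul_eq_mul,
    filter_filter, ← sub_mul, ← hcount]
  push_cast
  ring

lemma harm_sub_harm_sub {n m : ℕ} (h : m ≤ n) :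
    harm n - harm (n - m) = ∑ s ∈ range m, 1 / ((n : ℝ) - s) := by
  induction m with
  | zero => simp
  | succ m ih =>
    obtain ⟨j, hj⟩ : ∃ j, n - m = j + 1 := ⟨n - m - 1, by omega⟩
    have hj' : (j : ℝ) + 1 = n - m := by
      rw [← Nat.cast_add_one, ← hj, Nat.cast_sub (by omega)]
    rw [sum_range_succ, ← ih (by omega), show n - (m + 1) = j by omega, hj]
    simp only [harm, sum_range_succ, hj']
    ring

lemma sum_range_choose_div_choose_pred {n m : ℕ} (h : m ≤ n) :
    ∑ s ∈ range m, (n.choose s : ℝ) / (n - 1).choose s = n * (harm n - harm (n - m)) := by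
  rw [harm_sub_harm_sub h, mul_sum]
  refine sum_congr rfl fun s hs => ?_
  have hsn : s < n := (mem_range.1 hs).trans_le h
  have hchoose := Nat.choose_mul_succ_eq (n - 1) s
  rw [Nat.sub_add_cancel (by omega)] at hchoose
  have hB : ((n - 1).choose s : ℝ) ≠ 0 := by exact_mod_cast (Nat.choose_pos (by omega)).ne'
  have hns : (n : ℝ) - s ≠ 0 := sub_ne_zero.2 (by exact_mod_cast hsn.ne')
  rw [mul_one_div, div_eq_div_iff hB hns, ← Nat.cast_sub hsn.le]
  exact_mod_cast hchoose.symm.trans (mul_comm _ _)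

lemma hamWt_le_sub_card {R : Type*} [Zero R] {n : ℕ} {x : Fin n → R} {S : Finset (Fin n)}
    (h : ∀ j ∈ S, x j = 0) : hamWt x ≤ n - #S := by
  classical
  calc hamWt x = #{i | x i ≠ 0} := by rw [hamWt, Nat.card_eq_fintype_card, Fintype.card_subtype]
    _ ≤ #Sᶜ := card_le_card fun i hi => mem_compl.2 fun hiS => (mem_filter.1 hi).2 (h i hiS)
    _ = n - #S := by rw [card_compl, Fintype.card_fin]

lemma hamWt_le {R : Type*} [Zero R] {n : ℕ} (x : Fin n → R) : hamWt x ≤ n := by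
  simpa using hamWt_le_sub_card (x := x) (S := ∅) (by simp)

section InformationSet

variable {F : Type*} [Field F] {k n : ℕ}

def IsInformationSet (G : Matrix (Fin k) (Fin n) F) (S : Finset (Fin n)) : Prop :=
  Submodule.span F ((fun j => fun r => G r j) '' (S : Set (Fin n))) = ⊤

variable {G : Matrix (Fin k) (Fin n) F}

lemma isInformationSet_univ (hG : G.rank = k) : IsInformationSet G univ := by
  apply Submodule.eq_top_of_finrank_eq
  rw [Matrix.rank_eq_finrank_span_cols] at hG
  rw [Module.finrank_fin_fun, coe_univ, Set.image_univ]
  exact hG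

lemma le_card_of_isInformationSet {S : Finset (Fin n)} (hS : IsInformationSet G S) :
    k ≤ #S := by
  classical
  calc k = Module.finrank F (Submodule.span F
        ((fun j => fun r => G r j) '' (S : Set (Fin n)))) := by
        rw [hS, finrank_top, Module.finrank_fin_fun]
    _ ≤ #(S.image fun j r => G r j) := by
        rw [← coe_image]
        exact finrank_span_finset_le_card _
    _ ≤ #S := card_image_le

lemma exists_mem_span_rows_ne_zero_of_not_isInformationSet (hG : IsInformationSet G univ)
    {S : Finset (Fin n)} (hS : ¬ IsInformationSet G S) :
    ∃ x ∈ Submodule.span F (Set.range G), x ≠ 0 ∧ ∀ j ∈ S, x j = 0 := by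
  obtain ⟨φ, hφ, hφS⟩ := Submodule.exists_dual_map_eq_bot_of_lt_top
    (lt_top_iff_ne_top.2 hS) inferInstance
  refine ⟨fun j => φ fun r => G r j, ?_, fun hx => hφ ?_, fun j hj => ?_⟩
  · have : (fun j => φ fun r => G r j) = ∑ r, φ (fun i => if r = i then 1 else 0) • G r := by
      ext j
      rw [LinearMap.pi_apply_eq_sum_univ φ, Finset.sum_apply]
      simp only [Pi.smul_apply, smul_eq_mul, mul_comm]
    rw [this]
    exact Submodule.sum_mem _ fun r _ => Submodule.smul_mem _ _ (Submodule.subset_span ⟨r, rfl⟩)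
  · refine LinearMap.ext_on hG ?_
    rintro - ⟨j, -, rfl⟩
    exact congrFun hx j
  · have := Submodule.mem_map_of_mem (f := φ)
      (Submodule.subset_span (R := F) (Set.mem_image_of_mem (fun j r => G r j) hj))
    rwa [hφS] at this

lemma card_add_le_of_not_isInformationSet {d : ℕ} (hG : IsInformationSet G univ)
    (hd : ∀ x ∈ Submodule.span F (Set.range G), x ≠ 0 → d ≤ hamWt x)
    {S : Finset (Fin n)} (hS : ¬ IsInformationSet G S) : #S + d ≤ n := by
  obtain ⟨x, hx, hx0, hxS⟩ := exists_mem_span_rows_ne_zero_of_not_isInformationSet hG hS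
  have hwt := hamWt_le_sub_card hxS
  have hSn : #S ≤ n := by simpa using card_le_univ S
  have := hd x hx hx0
  omega

open Classical in
lemma card_filter_isInformationSet_eq_zero {s : ℕ} (hs : s < k) :
    #{S : Finset (Fin n) | #S = s ∧ IsInformationSet G S} = 0 :=
  card_eq_zero.2 <| filter_eq_empty_iff.2 fun _ _ ⟨hSs, hS⟩ =>
    (le_card_of_isInformationSet hS).not_gt (hSs ▸ hs)

open Classical in
lemma coverDepth_eq_sum_not_isInformationSet (hG : IsInformationSet G univ) :
    coverDepth G = ∑ S with ¬ IsInformationSet G S, (1 : ℝ) / (n - 1).choose #S := by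
  have hcount : ∀ t, Nat.card {f : Fin t → Fin n //
      Submodule.span F (Set.range fun i => fun r => G r (f i)) ≠ ⊤}
      = ∑ S with ¬ IsInformationSet G S, imageCount t S := by
    intro t
    rw [← card_filter_image_eq_sum_imageCount, Nat.card_eq_fintype_card, Fintype.card_subtype]
    congr 1
    refine filter_congr fun f _ => ?_
    rw [IsInformationSet, coe_image, coe_univ, Set.image_univ, ← Set.range_comp]
    rfl
  rw [coverDepth]
  simp_rw [hcount, Nat.cast_sum, sum_div]
  refine (hasSum_sum fun S hS => ?_).tsum_eq
  have hS : #S < Fintype.card (Fin n) :=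
    (card_lt_iff_ne_univ S).2 fun h => (mem_filter.1 hS).2 (h ▸ hG)
  simpa using hasSum_imageCount hS

end InformationSet

theorem stmt16_general {F : Type*} [Field F] {k n d : ℕ}
    (hd : 1 ≤ d)
    (G : Matrix (Fin k) (Fin n) F) (hG : G.rank = k)
    (hd1 : ∀ x ∈ Submodule.span F (Set.range G), x ≠ 0 → d ≤ hamWt x)
    (hd2 : ∃ x ∈ Submodule.span F (Set.range G), x ≠ 0 ∧ hamWt x = d) :
    coverDepth G = n * (harm n - harm (d - 1)) - ∑ s ∈ Finset.Icc k (n - d),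
      (Nat.card {S : Finset (Fin n) // S.card = s ∧
          Submodule.span F ((fun j => fun r => G r j) '' (S : Set (Fin n))) = ⊤} : ℝ) /
        ((n - 1).choose s) := by
  classical
  have hdn : d ≤ n := by
    obtain ⟨x, -, -, rfl⟩ := hd2
    exact hamWt_le x
  have hG' := isInformationSet_univ hG
  have hsmall : ∀ S, ¬ IsInformationSet G S → #S ≤ n - d := fun S hS => by
    have := card_add_le_of_not_isInformationSet hG' hd1 hS
    omega
  have hα : ∀ s, Nat.card {S : Finset (Fin n) // S.card = s ∧
      Submodule.span F ((fun j => fun r => G r j) '' (S : Set (Fin n))) = ⊤}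
      = #{S | #S = s ∧ IsInformationSet G S} := fun s => by
    rw [Nat.card_eq_fintype_card, Fintype.card_subtype]
    rfl
  rw [coverDepth_eq_sum_not_isInformationSet hG',
    sum_filter_not_eq_sum_range_choose_sub _ hsmall fun s => 1 / ((n - 1).choose s : ℝ)]
  simp only [Fintype.card_fin, mul_one_div, hα]
  rw [sum_range_choose_div_choose_pred (by omega), show n - (n - d + 1) = d - 1 by omega]
  congr 1
  refine (sum_subset (fun s hs => by simp only [mem_Icc, mem_range] at hs ⊢; omega)
    fun s hs hs' => ?_).symm
  simp only [mem_Icc, mem_range] at hs hs'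
  rw [card_filter_isInformationSet_eq_zero (by omega), Nat.cast_zero, zero_div]

theorem stmt16 {F : Type*} [Field F] [Fintype F] {k n d : ℕ}
    (hk : 2 ≤ k) (hkn : k ≤ n) (hd : 1 ≤ d)
    (G : Matrix (Fin k) (Fin n) F) (hG : G.rank = k)
    (hd1 : ∀ x ∈ Submodule.span F (Set.range G), x ≠ 0 → d ≤ hamWt x)
    (hd2 : ∃ x ∈ Submodule.span F (Set.range G), x ≠ 0 ∧ hamWt x = d) :
    coverDepth G = n * (harm n - harm (d - 1)) - ∑ s ∈ Finset.Icc k (n - d),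
      (Nat.card {S : Finset (Fin n) // S.card = s ∧
          Submodule.span F ((fun j => fun r => G r j) '' (S : Set (Fin n))) = ⊤} : ℝ) /
        ((n - 1).choose s) :=
  stmt16_general hd G hG hd1 hd2
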